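/- arXiv:2505.21991 — 3 statements merged into one kernel-verified Lean document; each statement's English description precedes it below -/
import Mathlib

section
/- (Theorem 1, Eq. (1), semantic core) Let E be a real normed additive commutative group, let Ψ ⊆ E, and let I be a set of instructions preserving Ψ with a subset I* ⊆ I. Let Δ* and Δ₂ be nonnegative reals such that: (i) ‖σ s₁ − σ s₂‖ ≤ ‖s₁ − s₂‖ + Δ* for every σ ∈ I* and all s₁, s₂ ∈ Ψ; (ii) ‖σ₁ s₁ − σ₂ s₂‖ ≤ ‖s₁ − s₂‖ + Δ₂ for every σ₁ ∈ I, σ₂ ∈ I* and all s₁, s₂ ∈ Ψ. Let σ and σ* be length-L programs with σ(i) ∈ I and σ*(i) ∈ I* for every i, let s₀ ∈ Ψ, and let d be the instruction editing distance between σ and σ*. Then the outputs satisfy ‖(output of σ on s₀) − (output of σ* on s₀)‖ ≤ Δ₂·d + Δ*·(L − d). -/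
/-! Run the two programs side by side. At step `i` the distance between the current states
grows by at most `Δ*` when both programs execute the same instruction and by at most `Δ₂`
otherwise, so the final distance is at most the sum of these per-step defects, which is
`Δ₂·d + Δ*·(L − d)`. -/

open Finset Set

theorem dist_foldl_ofFn_le {X : Type*} [PseudoMetricSpace X] {Ψ : Set X} :
    ∀ {L : ℕ} (σ τ : Fin L → X → X) (c : Fin L → ℝ),
      (∀ i, MapsTo (σ i) Ψ Ψ) → (∀ i, MapsTo (τ i) Ψ Ψ) →
      (∀ i, ∀ a ∈ Ψ, ∀ b ∈ Ψ, dist (σ i a) (τ i b) ≤ dist a b + c i) →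
      ∀ s₁ ∈ Ψ, ∀ s₂ ∈ Ψ,
        dist ((List.ofFn σ).foldl (fun s g => g s) s₁) ((List.ofFn τ).foldl (fun s g => g s) s₂)
          ≤ dist s₁ s₂ + ∑ i, c i
  | 0, _, _, _, _, _, _, _, _, _, _ => by simp
  | L + 1, σ, τ, c, hσ, hτ, hstep, s₁, hs₁, s₂, hs₂ => by
    have htail := dist_foldl_ofFn_le (fun i => σ i.succ) (fun i => τ i.succ) (fun i => c i.succ)
      (fun i => hσ i.succ) (fun i => hτ i.succ) (fun i => hstep i.succ)
      (σ 0 s₁) (hσ 0 hs₁) (τ 0 s₂) (hτ 0 hs₂)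
    simp only [List.ofFn_succ, List.foldl_cons, Fin.sum_univ_succ] at htail ⊢
    linarith [hstep 0 s₁ hs₁ s₂ hs₂]

theorem sum_ite_eq_mul_card_not {α : Type*} [Fintype α] (p : α → Prop) [DecidablePred p]
    (a b : ℝ) :
    ∑ i, (if p i then a else b) =
      b * Nat.card {i // ¬p i} + a * (Fintype.card α - Nat.card {i // ¬p i}) := by
  have hcard : (#{i | p i} : ℝ) + #{i | ¬p i} = Fintype.card α := by
    exact_mod_cast card_filter_add_card_filter_not p
  rw [sum_ite, sum_const, sum_const, nsmul_eq_mul, nsmul_eq_mul, Nat.card_eq_fintype_card,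
    Fintype.card_subtype, ← hcard]
  ring

theorem fitness_gap_semantic_core_general
    {E : Type*} [NormedAddCommGroup E]
    (Ψ : Set E) (I Istar : Set (E → E))
    (hpres : ∀ σ ∈ I, ∀ s ∈ Ψ, σ s ∈ Ψ)
    (hsub : Istar ⊆ I)
    (Δstar Δ₂ : ℝ)
    (hone : ∀ σ ∈ Istar, ∀ s₁ ∈ Ψ, ∀ s₂ ∈ Ψ,
      ‖σ s₁ - σ s₂‖ ≤ ‖s₁ - s₂‖ + Δstar)
    (htwo : ∀ σ₁ ∈ I, ∀ σ₂ ∈ Istar, ∀ s₁ ∈ Ψ, ∀ s₂ ∈ Ψ,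
      ‖σ₁ s₁ - σ₂ s₂‖ ≤ ‖s₁ - s₂‖ + Δ₂)
    (L : ℕ) (σ σstar : Fin L → (E → E))
    (hσ : ∀ i, σ i ∈ I) (hσstar : ∀ i, σstar i ∈ Istar)
    (s₀ : E) (hs₀ : s₀ ∈ Ψ)
    (d : ℕ) (hd : d = Nat.card {i : Fin L // σ i ≠ σstar i}) :
    ‖(List.ofFn σ).foldl (fun s g => g s) s₀ -
      (List.ofFn σstar).foldl (fun s g => g s) s₀‖ ≤
      Δ₂ * (d : ℝ) + Δstar * ((L : ℝ) - (d : ℝ)) := by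
  classical
  have hstep : ∀ i, ∀ a ∈ Ψ, ∀ b ∈ Ψ,
      dist (σ i a) (σstar i b) ≤ dist a b + if σ i = σstar i then Δstar else Δ₂ := by
    intro i a ha b hb
    simp only [dist_eq_norm]
    split_ifs with heq
    · exact heq ▸ hone _ (hσstar i) a ha b hb
    · exact htwo _ (hσ i) _ (hσstar i) a ha b hb
  have hrun := dist_foldl_ofFn_le σ σstar _ (fun i => hpres _ (hσ i))
    (fun i => hpres _ (hsub (hσstar i))) hstep s₀ hs₀ s₀ hs₀
  rwa [dist_self, zero_add, sum_ite_eq_mul_card_not, Fintype.card_fin, ← hd,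
    dist_eq_norm] at hrun

/-- (Theorem 1, Eq. (1), semantic core.) Within a semantic space `Ψ` preserved by an
instruction set `I` with subset `I*`, if a shared optimal instruction expands distances by
at most `Δ*` and a pair of (arbitrary, optimal) instructions expands distances by at most
`Δ₂`, then two length-`L` programs whose instruction editing distance is `d` produce outputs
at distance at most `Δ₂·d + Δ*·(L − d)`. -/
theorem fitness_gap_semantic_core
    {E : Type*} [NormedAddCommGroup E]
    (Ψ : Set E) (I Istar : Set (E → E))
    (hpres : ∀ σ ∈ I, ∀ s ∈ Ψ, σ s ∈ Ψ)
    (hsub : Istar ⊆ I)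
    (Δstar Δ₂ : ℝ) (hΔstar : 0 ≤ Δstar) (hΔ₂ : 0 ≤ Δ₂)
    (hone : ∀ σ ∈ Istar, ∀ s₁ ∈ Ψ, ∀ s₂ ∈ Ψ,
      ‖σ s₁ - σ s₂‖ ≤ ‖s₁ - s₂‖ + Δstar)
    (htwo : ∀ σ₁ ∈ I, ∀ σ₂ ∈ Istar, ∀ s₁ ∈ Ψ, ∀ s₂ ∈ Ψ,
      ‖σ₁ s₁ - σ₂ s₂‖ ≤ ‖s₁ - s₂‖ + Δ₂)
    (L : ℕ) (σ σstar : Fin L → (E → E))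
    (hσ : ∀ i, σ i ∈ I) (hσstar : ∀ i, σstar i ∈ Istar)
    (s₀ : E) (hs₀ : s₀ ∈ Ψ)
    (d : ℕ) (hd : d = Nat.card {i : Fin L // σ i ≠ σstar i}) :
    ‖(List.ofFn σ).foldl (fun s g => g s) s₀ -
      (List.ofFn σstar).foldl (fun s g => g s) s₀‖ ≤
      Δ₂ * (d : ℝ) + Δstar * ((L : ℝ) - (d : ℝ)) :=
  fitness_gap_semantic_core_general Ψ I Istar hpres hsub Δstar Δ₂ hone htwo L σ σstar hσ hσstar s₀
    hs₀ d hd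
end

section
/- (Theorem 1, Eq. (1)) Let E be a real normed additive commutative group, let Ψ ⊆ E, and let I be a set of instructions preserving Ψ with a subset I* ⊆ I. Let K, Δ* and Δ₂ be nonnegative reals such that: (i) ‖σ s₁ − σ s₂‖ ≤ ‖s₁ − s₂‖ + Δ* for every σ ∈ I* and all s₁, s₂ ∈ Ψ; (ii) ‖σ₁ s₁ − σ₂ s₂‖ ≤ ‖s₁ − s₂‖ + Δ₂ for every σ₁ ∈ I, σ₂ ∈ I* and all s₁, s₂ ∈ Ψ. Let σ and σ* be length-L programs with σ(i) ∈ I and σ*(i) ∈ I* for every i, let s₀ ∈ Ψ, let d be the instruction editing distance between σ and σ*, write s* for the output of σ* on s₀, and let f : E → ℝ satisfy |f(s) − f(s*)| ≤ K·‖s − s*‖ for every s ∈ Ψ. Then |f(output of σ on s₀) − f(s*)| ≤ K·(Δ₂·d + Δ*·(L − d)). -/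
/-!
Run both programs side by side from the same input. At each step the distance between the two
current semantics grows by at most `Δ*` where the instructions agree (hypothesis (i)) and by at
most `Δ₂` where they differ (hypothesis (ii)). Summing over the `L` steps bounds the distance of
the outputs by `Δ₂·d + Δ*·(L − d)`, and the Lipschitz bound on `f` turns this into the fitness gap.
-/

open Finset

section Semantics

variable {E : Type*}

theorem List.foldl_apply_mem {Ψ : Set E} {l : List (E → E)} (hl : ∀ g ∈ l, Set.MapsTo g Ψ Ψ)
    {s : E} (hs : s ∈ Ψ) : l.foldl (fun s g => g s) s ∈ Ψ := by
  induction l generalizing s with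
  | nil => exact hs
  | cons g l ih =>
    exact ih (fun h hh => hl h (List.mem_cons_of_mem g hh)) (hl g List.mem_cons_self hs)

variable [NormedAddCommGroup E] {Ψ : Set E} {I Istar : Set (E → E)} {Δstar Δ₂ : ℝ}

open Classical in
theorem norm_sub_apply_le_add_ite
    (hone : ∀ σ ∈ Istar, ∀ s₁ ∈ Ψ, ∀ s₂ ∈ Ψ, ‖σ s₁ - σ s₂‖ ≤ ‖s₁ - s₂‖ + Δstar)
    (htwo : ∀ σ₁ ∈ I, ∀ σ₂ ∈ Istar, ∀ s₁ ∈ Ψ, ∀ s₂ ∈ Ψ, ‖σ₁ s₁ - σ₂ s₂‖ ≤ ‖s₁ - s₂‖ + Δ₂)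
    {g gstar : E → E} (hg : g ∈ I) (hgstar : gstar ∈ Istar) {s₁ s₂ : E} (hs₁ : s₁ ∈ Ψ)
    (hs₂ : s₂ ∈ Ψ) :
    ‖g s₁ - gstar s₂‖ ≤ ‖s₁ - s₂‖ + if g = gstar then Δstar else Δ₂ := by
  split_ifs with h
  · subst h
    exact hone g hgstar s₁ hs₁ s₂ hs₂
  · exact htwo g hg gstar hgstar s₁ hs₁ s₂ hs₂

open Classical in
theorem norm_sub_foldl_ofFn_le (hpres : ∀ σ ∈ I, Set.MapsTo σ Ψ Ψ) (hsub : Istar ⊆ I)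
    (hone : ∀ σ ∈ Istar, ∀ s₁ ∈ Ψ, ∀ s₂ ∈ Ψ, ‖σ s₁ - σ s₂‖ ≤ ‖s₁ - s₂‖ + Δstar)
    (htwo : ∀ σ₁ ∈ I, ∀ σ₂ ∈ Istar, ∀ s₁ ∈ Ψ, ∀ s₂ ∈ Ψ, ‖σ₁ s₁ - σ₂ s₂‖ ≤ ‖s₁ - s₂‖ + Δ₂)
    {L : ℕ} {σ σstar : Fin L → (E → E)} (hσ : ∀ i, σ i ∈ I) (hσstar : ∀ i, σstar i ∈ Istar)
    {s₁ s₂ : E} (hs₁ : s₁ ∈ Ψ) (hs₂ : s₂ ∈ Ψ) :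
    ‖(List.ofFn σ).foldl (fun s g => g s) s₁ - (List.ofFn σstar).foldl (fun s g => g s) s₂‖ ≤
      ‖s₁ - s₂‖ + ∑ i, if σ i = σstar i then Δstar else Δ₂ := by
  induction L generalizing s₁ s₂ with
  | zero => simp
  | succ L ih =>
    simp only [List.ofFn_succ, List.foldl_cons, Fin.sum_univ_succ]
    have hstep := norm_sub_apply_le_add_ite hone htwo (hσ 0) (hσstar 0) hs₁ hs₂
    have hrest := ih (fun i => hσ i.succ) (fun i => hσstar i.succ)
      (hpres _ (hσ 0) hs₁) (hpres _ (hsub (hσstar 0)) hs₂)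
    linarith

end Semantics

open Classical in
theorem Fintype.sum_ite_eq_mul_card_ne {ι α : Type*} [Fintype ι] (f g : ι → α) (a b : ℝ) :
    (∑ i, if f i = g i then a else b) =
      b * Nat.card {i // f i ≠ g i} + a * (Fintype.card ι - Nat.card {i // f i ≠ g i}) := by
  rw [Finset.sum_ite, sum_const, sum_const, Nat.card_eq_fintype_card, Fintype.card_subtype,
    ← card_univ, ← Finset.card_filter_add_card_filter_not (s := univ) (fun i => f i = g i)]
  simp only [nsmul_eq_mul, ne_eq]
  push_cast
  ring

theorem fitness_gap_supremum_general
    {E : Type*} [NormedAddCommGroup E]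
    (Ψ : Set E) (I Istar : Set (E → E))
    (hpres : ∀ σ ∈ I, ∀ s ∈ Ψ, σ s ∈ Ψ)
    (hsub : Istar ⊆ I)
    (K Δstar Δ₂ : ℝ) (hK : 0 ≤ K)
    (hone : ∀ σ ∈ Istar, ∀ s₁ ∈ Ψ, ∀ s₂ ∈ Ψ,
      ‖σ s₁ - σ s₂‖ ≤ ‖s₁ - s₂‖ + Δstar)
    (htwo : ∀ σ₁ ∈ I, ∀ σ₂ ∈ Istar, ∀ s₁ ∈ Ψ, ∀ s₂ ∈ Ψ,
      ‖σ₁ s₁ - σ₂ s₂‖ ≤ ‖s₁ - s₂‖ + Δ₂)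
    (L : ℕ) (σ σstar : Fin L → (E → E))
    (hσ : ∀ i, σ i ∈ I) (hσstar : ∀ i, σstar i ∈ Istar)
    (s₀ : E) (hs₀ : s₀ ∈ Ψ)
    (d : ℕ) (hd : d = Nat.card {i : Fin L // σ i ≠ σstar i})
    (sstar : E) (hsstar : sstar = (List.ofFn σstar).foldl (fun s g => g s) s₀)
    (f : E → ℝ)
    (hf : ∀ s ∈ Ψ, |f s - f sstar| ≤ K * ‖s - sstar‖) :
    |f ((List.ofFn σ).foldl (fun s g => g s) s₀) - f sstar| ≤
      K * (Δ₂ * (d : ℝ) + Δstar * ((L : ℝ) - (d : ℝ))) := by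
  have hout : (List.ofFn σ).foldl (fun s g => g s) s₀ ∈ Ψ :=
    List.foldl_apply_mem (List.forall_mem_ofFn_iff.mpr fun i => hpres _ (hσ i)) hs₀
  have hdist := norm_sub_foldl_ofFn_le hpres hsub hone htwo hσ hσstar hs₀ hs₀
  rw [sub_self, norm_zero, zero_add, Fintype.sum_ite_eq_mul_card_ne, Fintype.card_fin, ← hd,
    ← hsstar] at hdist
  exact (hf _ hout).trans (mul_le_mul_of_nonneg_left hdist hK)

/-- (Theorem 1, Eq. (1).) Fitness-gap supremum: under the semantic expansion bounds `Δ*`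
and `Δ₂` and a Lipschitz-type fitness bound with constant `K` around the target semantics
`s* = output of σ* on s₀`, the fitness gap between a program `σ` and an optimal program
`σ*` at instruction editing distance `d` is at most `K·(Δ₂·d + Δ*·(L − d))`. -/
theorem fitness_gap_supremum
    {E : Type*} [NormedAddCommGroup E]
    (Ψ : Set E) (I Istar : Set (E → E))
    (hpres : ∀ σ ∈ I, ∀ s ∈ Ψ, σ s ∈ Ψ)
    (hsub : Istar ⊆ I)
    (K Δstar Δ₂ : ℝ) (hK : 0 ≤ K) (hΔstar : 0 ≤ Δstar) (hΔ₂ : 0 ≤ Δ₂)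
    (hone : ∀ σ ∈ Istar, ∀ s₁ ∈ Ψ, ∀ s₂ ∈ Ψ,
      ‖σ s₁ - σ s₂‖ ≤ ‖s₁ - s₂‖ + Δstar)
    (htwo : ∀ σ₁ ∈ I, ∀ σ₂ ∈ Istar, ∀ s₁ ∈ Ψ, ∀ s₂ ∈ Ψ,
      ‖σ₁ s₁ - σ₂ s₂‖ ≤ ‖s₁ - s₂‖ + Δ₂)
    (L : ℕ) (σ σstar : Fin L → (E → E))
    (hσ : ∀ i, σ i ∈ I) (hσstar : ∀ i, σstar i ∈ Istar)
    (s₀ : E) (hs₀ : s₀ ∈ Ψ)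
    (d : ℕ) (hd : d = Nat.card {i : Fin L // σ i ≠ σstar i})
    (sstar : E) (hsstar : sstar = (List.ofFn σstar).foldl (fun s g => g s) s₀)
    (f : E → ℝ)
    (hf : ∀ s ∈ Ψ, |f s - f sstar| ≤ K * ‖s - sstar‖) :
    |f ((List.ofFn σ).foldl (fun s g => g s) s₀) - f sstar| ≤
      K * (Δ₂ * (d : ℝ) + Δstar * ((L : ℝ) - (d : ℝ))) :=
  fitness_gap_supremum_general Ψ I Istar hpres hsub K Δstar Δ₂ hK hone htwo L σ σstar hσ hσstar s₀
    hs₀ d hd sstar hsstar f hf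
end

section
/- (Theorem 2, Similar Fitness Probability) Let P be a finite set of elements of a type α, δ : α → ℕ, f : α → β, and fix d : ℕ and v : β. Define P^d = {ρ ∈ P : δ(ρ) ≤ d}, P^{d+1} = {ρ ∈ P : δ(ρ) ≤ d+1}, P^(d,v) = {ρ ∈ P^d : f(ρ) = v}, and P^(d+1,v) = {ρ ∈ P^{d+1} : f(ρ) = v}. Assume 1 ≤ |P^(d,v)|, |P^d| < |P^{d+1}|, and (as real numbers) |P^(d+1,v) \ P^(d,v)| / |P^{d+1} \ P^d| ≤ |P^(d,v)|/|P^d| + |P^(d,v)|/|P^{d+1} \ P^d|. Then | |P^(d+1,v)|/|P^{d+1}| − |P^(d,v)|/|P^d| | < |P^(d,v)|/|P^d|. -/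
/-!
Write `a = |P^(d,v)|`, `n = |P^d|`, `N = |P^{d+1}|` and `b` for the number of new programs with
fitness `v`. The hypothesis on the shell, multiplied by `N - n`, says exactly `b ≤ a N / n`. Hence
`(a + b) / N ≤ a / N + a / n < 2 a / n`, while `(a + b) / N > 0` because `a ≥ 1`.
-/

theorem le_mul_div_of_div_sub_le {a b n N : ℝ} (hn : 0 < n) (hnN : n < N)
    (h : b / (N - n) ≤ a / n + a / (N - n)) : b ≤ a * N / n := by
  have hm : 0 < N - n := sub_pos.mpr hnN
  calc b = b / (N - n) * (N - n) := by field_simp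
    _ ≤ (a / n + a / (N - n)) * (N - n) := by gcongr
    _ = a * N / n := by field_simp; ring

theorem abs_div_sub_div_lt_of_div_sub_le {a b n N : ℝ} (ha : 0 < a) (hb : 0 ≤ b) (hn : 0 < n)
    (hnN : n < N) (h : b / (N - n) ≤ a / n + a / (N - n)) :
    |(b + a) / N - a / n| < a / n := by
  have hN : 0 < N := hn.trans hnN
  have hb_le : b ≤ a * N / n := le_mul_div_of_div_sub_le hn hnN h
  have ha_lt : a < a * N / n := by rw [lt_div_iff₀ hn]; exact mul_lt_mul_of_pos_left hnN ha
  rw [abs_sub_lt_iff]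
  constructor
  · have : (b + a) / N < a / n + a / n := by
      rw [div_lt_iff₀ hN]
      calc b + a < a * N / n + a * N / n := by linarith
        _ = (a / n + a / n) * N := by ring
    linarith
  · have : 0 < (b + a) / N := by positivity
    linarith

theorem Finset.abs_card_div_sub_card_div_lt {α : Type*} [DecidableEq α] {A B S T : Finset α}
    (hAS : A ⊆ S) (hST : S ⊆ T) (hAB : A ⊆ B) (hA : A.Nonempty) (hlt : S.card < T.card)
    (h : ((B \ A).card : ℝ) / (T \ S).card ≤ (A.card : ℝ) / S.card + (A.card : ℝ) / (T \ S).card) :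
    |(B.card : ℝ) / T.card - (A.card : ℝ) / S.card| < (A.card : ℝ) / S.card := by
  have hS : 0 < S.card := hA.card_pos.trans_le (card_le_card hAS)
  rw [card_sdiff_of_subset hST, Nat.cast_sub hlt.le] at h
  rw [← card_sdiff_add_card_eq_card hAB, Nat.cast_add]
  exact abs_div_sub_div_lt_of_div_sub_le (by exact_mod_cast hA.card_pos) (Nat.cast_nonneg _)
    (by exact_mod_cast hS) (by exact_mod_cast hlt) h

/-- (Theorem 2, Similar Fitness Probability.) If the conditional fitness probability on the
newly added shell `P^{d+1} \ P^d` does not exceed `|P^(d,v)|/|P^d| + |P^(d,v)|/|P^{d+1} \ P^d|`,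
then the fitness probabilities over `P^{d+1}` and `P^d` differ by less than `|P^(d,v)|/|P^d|`. -/
theorem similar_fitness_probability
    {α β : Type*} [DecidableEq α] [DecidableEq β]
    (P : Finset α) (δ : α → ℕ) (f : α → β) (d : ℕ) (v : β)
    (Pd Pd1 Pdv Pd1v : Finset α)
    (hPd : Pd = P.filter fun ρ => δ ρ ≤ d)
    (hPd1 : Pd1 = P.filter fun ρ => δ ρ ≤ d + 1)
    (hPdv : Pdv = Pd.filter fun ρ => f ρ = v)
    (hPd1v : Pd1v = Pd1.filter fun ρ => f ρ = v)
    (hcard : 1 ≤ Pdv.card)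
    (hlt : Pd.card < Pd1.card)
    (hratio : ((Pd1v \ Pdv).card : ℝ) / ((Pd1 \ Pd).card : ℝ) ≤
      (Pdv.card : ℝ) / (Pd.card : ℝ) + (Pdv.card : ℝ) / ((Pd1 \ Pd).card : ℝ)) :
    |(Pd1v.card : ℝ) / (Pd1.card : ℝ) - (Pdv.card : ℝ) / (Pd.card : ℝ)| <
      (Pdv.card : ℝ) / (Pd.card : ℝ) := by
  have hPd_Pd1 : Pd ⊆ Pd1 := by
    rw [hPd, hPd1]
    exact Finset.monotone_filter_right P fun _ _ h => h.trans d.le_succ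
  have hPdv_Pd1v : Pdv ⊆ Pd1v := by
    rw [hPdv, hPd1v]
    exact Finset.filter_subset_filter _ hPd_Pd1
  have hPdv_Pd : Pdv ⊆ Pd := hPdv ▸ Finset.filter_subset _ _
  exact Finset.abs_card_div_sub_card_div_lt hPdv_Pd hPd_Pd1 hPdv_Pd1v
    (Finset.card_pos.mp hcard) hlt hratio
end
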